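/- If F is a maximum arborescence forest of digraph G with root r, and vertex v has a directed path to r in G, then v belongs to the arborescence (weakly connected component) of r in F. -/

import Mathlib

open Finset

variable {V : Type*} [Fintype V] [DecidableEq V]

/-- The in-degree of a vertex `v` in the digraph with arc set `F`. -/
def inDeg (F : Finset (V × V)) (v : V) : ℕ := (F.filter fun a => a.2 = v).card

/-- A root is a vertex of in-degree `0`. -/
def IsRoot (F : Finset (V × V)) (v : V) : Prop := inDeg F v = 0

/-- `F` is acyclic when arc directions are forgotten (no loops, no antiparallel
pairs, and the underlying simple graph is acyclic). -/
def UndirAcyclic (F : Finset (V × V)) : Prop :=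
  (∀ a ∈ F, a.1 ≠ a.2 ∧ (a.2, a.1) ∉ F) ∧
  (SimpleGraph.fromRel fun u v => (u, v) ∈ F).IsAcyclic

/-- An arborescence forest: every vertex has in-degree at most `1`, and the
graph is acyclic ignoring directions. -/
def IsArbForest (F : Finset (V × V)) : Prop :=
  (∀ v, inDeg F v ≤ 1) ∧ UndirAcyclic F

/-- A maximum arborescence forest of `G`: an arborescence forest `F ⊆ G` of
maximum arc cardinality. -/
def IsMaxArbForest (G F : Finset (V × V)) : Prop :=
  F ⊆ G ∧ IsArbForest F ∧ ∀ F' ⊆ G, IsArbForest F' → F'.card ≤ F.card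

/-- Directed reachability in arc set `G`. -/
def Reach (G : Finset (V × V)) (u v : V) : Prop :=
  Relation.ReflTransGen (fun x y => (x, y) ∈ G) u v

/-- Weak reachability: `u` and `v` are in the same weakly connected component. -/
def WReach (F : Finset (V × V)) (u v : V) : Prop :=
  Relation.ReflTransGen (fun x y => (x, y) ∈ F ∨ (y, x) ∈ F) u v

/-- A directed path in `G`, given as its (duplicate-free) list of vertices. -/
def IsDiPath (G : Finset (V × V)) (p : List V) : Prop :=
  p.Chain' (fun u v => (u, v) ∈ G) ∧ p.Nodup

/-- The arcs of a path given as a vertex list. -/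
def pathArcs (p : List V) : Finset (V × V) := (p.zip p.tail).toFinset

/-- `UPDATE(F, P)`: remove the parent arcs (all in-arcs) of every vertex of the
path `p` other than its first vertex, and add the arcs of `p`. -/
def update (F : Finset (V × V)) (p : List V) : Finset (V × V) :=
  (F.filter fun a => a.2 ∉ p.tail) ∪ pathArcs p

/-- A feasible path for `F` from root `r` to root `r'` in `G`: a directed path
`p = p₁ ++ p₂` from `r` to `r'` such that all arcs of `p₁` belong to the
arborescence (weak component) of `r` in `F` and all vertices of `p₂` belong to
the arborescence of `r'` in `F`. -/
def FeasiblePath (G F : Finset (V × V)) (r r' : V) (p : List V) : Prop :=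
  IsDiPath G p ∧ p.head? = some r ∧ p.getLast? = some r' ∧
  ∃ p₁ p₂ : List V, p = p₁ ++ p₂ ∧
    (∀ a ∈ pathArcs p₁, a ∈ F ∧ WReach F r a.1 ∧ WReach F r a.2) ∧
    (∀ v ∈ p₂, WReach F r' v)

/-
Let `C` be the weak component of the root `r`. If some `v` with a directed path to `r` lay
outside `C`, the path would contain an arc `(x, w)` of `G` with `x ∉ C` and `w ∈ C`. The
head `w` cannot be a root, or `F + (x, w)` would be a larger arborescence forest. So `w`
has a parent arc `(p, w)`, and `F' = F - (p, w) + (x, w)` is again a maximum arborescence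
forest with root `r`. In `F - (p, w)` both `r` and `w` are roots, and a root reaches no
other root weakly (a weak path out of a root is directed when in-degrees are at most one),
so the component of `r` in `F'` is `C` minus at least `w`. Induction on `|C|` concludes.
-/

section UndirectedReachability

omit [Fintype V] [DecidableEq V]

variable {F G : Finset (V × V)} {u v w : V}

theorem wReach_symm (h : WReach F u v) : WReach F v u :=
  Relation.reflTransGen_swap.1 (Relation.ReflTransGen.mono (fun _ _ hab => hab.symm) _ _ h)

theorem WReach.mono {F' : Finset (V × V)} (hFF' : F ⊆ F') (h : WReach F u v) : WReach F' u v :=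
  Relation.ReflTransGen.mono (fun _ _ hab => Or.imp (@hFF' _) (@hFF' _) hab) _ _ h

theorem exists_arc_into_of_reach {P : V → Prop} (hv : Reach G v w) (hw : P w) (hv' : ¬ P v) :
    ∃ x y, (x, y) ∈ G ∧ ¬ P x ∧ P y := by
  induction hv using Relation.ReflTransGen.head_induction_on with
  | refl => exact absurd hw hv'
  | @head a b hab _ ih =>
    by_cases hb : P b
    · exact ⟨a, b, hab, hv', hb⟩
    · exact ih hb

def undirGraph (F : Finset (V × V)) : SimpleGraph V := SimpleGraph.fromRel fun u v => (u, v) ∈ F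

theorem undirGraph_mono {F' : Finset (V × V)} (hF' : F' ⊆ F) : undirGraph F' ≤ undirGraph F :=
  fun _ _ h => (SimpleGraph.fromRel_adj _ _ _).2 ⟨h.1, h.2.imp (@hF' _) (@hF' _)⟩

theorem wReach_of_reachable (h : (undirGraph F).Reachable u v) : WReach F u v :=
  Relation.ReflTransGen.mono (fun _ _ hab => ((SimpleGraph.fromRel_adj _ _ _).1 hab).2) _ _
    ((SimpleGraph.reachable_iff_reflTransGen _ _).1 h)

theorem UndirAcyclic.mono {F' : Finset (V × V)} (hF' : F' ⊆ F) (hF : UndirAcyclic F) :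
    UndirAcyclic F' :=
  ⟨fun a ha => ⟨(hF.1 a (hF' ha)).1, fun h => (hF.1 a (hF' ha)).2 (hF' h)⟩,
    SimpleGraph.IsAcyclic.anti (undirGraph_mono hF') hF.2⟩

end UndirectedReachability

section Forests

omit [Fintype V]

variable {G F : Finset (V × V)} {r p u v w x : V}

theorem wReach_of_wReach_insert (hx : ¬ WReach F u x) (hw : ¬ WReach F u w)
    (h : WReach (insert (x, w) F) u v) : WReach F u v := by
  induction h with
  | refl => exact Relation.ReflTransGen.refl
  | @tail b c _ hbc ih =>
    rcases hbc with hbc | hbc <;> rcases Finset.mem_insert.mp hbc with hbc | hbc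
    · exact absurd (Prod.mk.inj hbc).1 (fun hb => hx (hb ▸ ih))
    · exact ih.tail (Or.inl hbc)
    · exact absurd (Prod.mk.inj hbc).2 (fun hb => hw (hb ▸ ih))
    · exact ih.tail (Or.inr hbc)

theorem undirGraph_insert :
    undirGraph (insert (x, w) F) = undirGraph F ⊔ SimpleGraph.edge x w := by
  ext a b
  simp only [undirGraph, SimpleGraph.sup_adj, SimpleGraph.edge_adj, SimpleGraph.fromRel_adj,
    Finset.mem_insert, Prod.mk.injEq]
  tauto

theorem UndirAcyclic.insert (hF : UndirAcyclic F) (h : ¬ WReach F x w) :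
    UndirAcyclic (insert (x, w) F) := by
  have hne : x ≠ w := fun hxw => h (hxw ▸ Relation.ReflTransGen.refl)
  have hwx : (w, x) ∉ F := fun hwx => h (Relation.ReflTransGen.single (Or.inr hwx))
  refine ⟨fun a ha => ?_, ?_⟩
  · rcases Finset.mem_insert.mp ha with rfl | ha
    · refine ⟨hne, fun hwx' => ?_⟩
      rcases Finset.mem_insert.mp hwx' with hxw | hwx'
      · exact hne (Prod.mk.inj hxw).1.symm
      · exact hwx hwx'
    · refine ⟨(hF.1 a ha).1, fun ha' => ?_⟩
      rcases Finset.mem_insert.mp ha' with ha' | ha'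
      · obtain ⟨h2, h1⟩ := Prod.mk.inj ha'
        exact hwx (h1 ▸ h2 ▸ ha)
      · exact (hF.1 a ha).2 ha'
  · change (undirGraph _).IsAcyclic
    rw [undirGraph_insert]
    exact hF.2.sup_edge_of_not_reachable (mt wReach_of_reachable h)

theorem isRoot_iff : IsRoot F r ↔ ∀ u, (u, r) ∉ F := by
  simp only [IsRoot, inDeg, Finset.card_eq_zero, Finset.filter_eq_empty_iff, Prod.forall]
  exact ⟨fun h u hu => h u r hu rfl, fun h u v huv hv => h u (hv ▸ huv)⟩

theorem inDeg_le_one_iff : inDeg F w ≤ 1 ↔ ∀ u u', (u, w) ∈ F → (u', w) ∈ F → u = u' := by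
  simp only [inDeg, Finset.card_le_one, Finset.mem_filter, Prod.forall, and_imp, Prod.mk.injEq]
  exact ⟨fun h u u' hu hu' => (h u w hu rfl u' w hu' rfl).1,
    fun h a b hab hb a' b' hab' hb' => ⟨h a a' (hb ▸ hab) (hb' ▸ hab'), hb.trans hb'.symm⟩⟩

theorem IsRoot.mono {F' : Finset (V × V)} (hF' : F' ⊆ F) (hr : IsRoot F r) : IsRoot F' r :=
  isRoot_iff.2 fun u hu => isRoot_iff.1 hr u (hF' hu)

theorem IsRoot.ne_of_mem (hr : IsRoot F r) (hp : (p, w) ∈ F) : r ≠ w :=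
  fun hrw => isRoot_iff.1 hr p (hrw ▸ hp)

theorem IsRoot.insert (hr : IsRoot F r) (hrw : r ≠ w) : IsRoot (insert (x, w) F) r := by
  rw [isRoot_iff] at hr ⊢
  intro u hu
  rcases Finset.mem_insert.mp hu with hu | hu
  · exact hrw (Prod.mk.inj hu).2
  · exact hr u hu

theorem isRoot_erase (hw : inDeg F w ≤ 1) (hp : (p, w) ∈ F) : IsRoot (F.erase (p, w)) w := by
  refine isRoot_iff.2 fun u hu => ?_
  obtain ⟨hne, hu⟩ := Finset.mem_erase.mp hu
  exact hne (by rw [inDeg_le_one_iff.1 hw u p hu hp])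

theorem inDeg_insert_le_one (hdeg : ∀ v, inDeg F v ≤ 1) (hw : IsRoot F w) (v : V) :
    inDeg (insert (x, w) F) v ≤ 1 := by
  refine inDeg_le_one_iff.2 fun u u' hu hu' => ?_
  rcases Finset.mem_insert.mp hu with hu | hu <;> rcases Finset.mem_insert.mp hu' with hu' | hu'
  · exact (Prod.mk.inj hu).1.trans (Prod.mk.inj hu').1.symm
  · exact absurd ((Prod.mk.inj hu).2 ▸ hu') (isRoot_iff.1 hw u')
  · exact absurd ((Prod.mk.inj hu').2 ▸ hu) (isRoot_iff.1 hw u)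
  · exact inDeg_le_one_iff.1 (hdeg v) u u' hu hu'

theorem reach_of_wReach_of_isRoot (hdeg : ∀ v, inDeg F v ≤ 1) (hr : IsRoot F r)
    (h : WReach F r w) : Reach F r w := by
  induction h with
  | refl => exact Relation.ReflTransGen.refl
  | @tail b c _ hbc ih =>
    refine hbc.elim ih.tail fun hcb => ?_
    rcases Relation.ReflTransGen.cases_tail ih with rfl | ⟨d, hrd, hdb⟩
    · exact absurd hcb (isRoot_iff.1 hr c)
    · exact inDeg_le_one_iff.1 (hdeg b) d c hdb hcb ▸ hrd

theorem eq_of_wReach_of_isRoot (hdeg : ∀ v, inDeg F v ≤ 1) (hr : IsRoot F r) (hw : IsRoot F w)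
    (h : WReach F r w) : r = w := by
  rcases (reach_of_wReach_of_isRoot hdeg hr h).cases_tail with hrw | ⟨d, -, hd⟩
  · exact hrw.symm
  · exact absurd hd (isRoot_iff.1 hw d)

theorem IsArbForest.mono {F' : Finset (V × V)} (hF' : F' ⊆ F) (hF : IsArbForest F) :
    IsArbForest F' :=
  ⟨fun v => (Finset.card_le_card (Finset.filter_subset_filter _ hF')).trans (hF.1 v),
    hF.2.mono hF'⟩

theorem IsArbForest.insert (hF : IsArbForest F) (hw : IsRoot F w) (h : ¬ WReach F x w) :
    IsArbForest (insert (x, w) F) :=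
  ⟨inDeg_insert_le_one hF.1 hw, hF.2.insert h⟩

theorem IsMaxArbForest.not_isRoot (hF : IsMaxArbForest G F) (hxw : (x, w) ∈ G)
    (h : ¬ WReach F x w) : ¬ IsRoot F w := fun hw => by
  have hnew : (x, w) ∉ F := fun hxw => h (Relation.ReflTransGen.single (Or.inl hxw))
  have := hF.2.2 _ (Finset.insert_subset hxw hF.1) (hF.2.1.insert hw h)
  rw [Finset.card_insert_of_notMem hnew] at this
  omega

theorem IsMaxArbForest.exchange (hF : IsMaxArbForest G F) (hxw : (x, w) ∈ G)
    (h : ¬ WReach F x w) (hp : (p, w) ∈ F) : IsMaxArbForest G (insert (x, w) (F.erase (p, w))) := by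
  have hsub : F.erase (p, w) ⊆ F := Finset.erase_subset _ _
  have hnew : (x, w) ∉ F.erase (p, w) := fun hxw =>
    h (Relation.ReflTransGen.single (Or.inl (hsub hxw)))
  refine ⟨Finset.insert_subset hxw (hsub.trans hF.1),
    (hF.2.1.mono hsub).insert (isRoot_erase (hF.2.1.1 w) hp) (mt (WReach.mono hsub) h),
    fun F' hF'G hF' => ?_⟩
  rw [Finset.card_insert_of_notMem hnew, Finset.card_erase_add_one hp]
  exact hF.2.2 F' hF'G hF'

theorem setOf_wReach_exchange_ssubset (hF : IsArbForest F) (hr : IsRoot F r)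
    (hx : ¬ WReach F r x) (hp : (p, w) ∈ F) (hw : WReach F r w) :
    {z | WReach (insert (x, w) (F.erase (p, w))) r z} ⊂ {z | WReach F r z} := by
  have hsub : F.erase (p, w) ⊆ F := Finset.erase_subset _ _
  have hrw : ¬ WReach (F.erase (p, w)) r w := fun h => hr.ne_of_mem hp <|
    eq_of_wReach_of_isRoot (hF.mono hsub).1 (hr.mono hsub) (isRoot_erase (hF.1 w) hp) h
  have hcomp z (hz : WReach (insert (x, w) (F.erase (p, w))) r z) : WReach (F.erase (p, w)) r z :=
    wReach_of_wReach_insert (mt (WReach.mono hsub) hx) hrw hz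
  exact Set.ssubset_iff_of_subset (fun z hz => (hcomp z hz).mono hsub) |>.2
    ⟨w, hw, fun hw' => hrw (hcomp w hw')⟩

end Forests

/-- If `F` is a maximum arborescence forest of `G` with root `r` and `v` has a
directed path to `r` in `G`, then `v` lies in the arborescence (weakly
connected component) of `r` in `F`. -/
theorem stmt2 (G F : Finset (V × V)) (hF : IsMaxArbForest G F)
    (r v : V) (hr : IsRoot F r) (hv : Reach G v r) :
    WReach F r v := by
  induction hn : {z | WReach F r z}.ncard using Nat.strong_induction_on generalizing F with
  | _ n ih =>
  by_contra hv'
  obtain ⟨x, w, hxw, hx, hw⟩ :=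
    exists_arc_into_of_reach (P := WReach F r) hv Relation.ReflTransGen.refl hv'
  have hxw' : ¬ WReach F x w := fun h => hx (hw.trans (wReach_symm h))
  obtain ⟨p, hp⟩ : ∃ p, (p, w) ∈ F := by simpa [isRoot_iff] using hF.not_isRoot hxw hxw'
  have hshrink := setOf_wReach_exchange_ssubset hF.2.1 hr hx hp hw
  have hr' : IsRoot (insert (x, w) (F.erase (p, w))) r :=
    (hr.mono (Finset.erase_subset _ _)).insert (hr.ne_of_mem hp)
  exact hv' <| hshrink.subset <|
    ih _ (hn ▸ Set.ncard_lt_ncard hshrink) _ (hF.exchange hxw hxw' hp) hr' rfl
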